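/- If an integer d²·m (with d, m positive integers) can be written as x² + y² + z² with gcd(x, y, z) = 1, then m can be written as a² + b² + c² with gcd(a, b, c) = 1. -/

import Mathlib

/-!
The argument runs in the Hurwitz order `H ⊂ ℍ[ℚ]`, a left principal ideal ring
because every rational quaternion lies at norm distance `< 1` from `H`. Write a primitive
representation `p²n = x² + y² + z²`, with `p` prime, as the pure quaternion `v = xi + yj + zk`,
and let `q` generate the left ideal `Hp + Hv`. Primitivity forces `N q = p`. Expanding
`q = αp + βv` with `v² = -p²n` shows `q v q⋆ = p² W` with `W` in `H` and pure, hence in the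
Lipschitz order: `W = ai + bj + ck` with `N W = n`. Since `v = q⋆ W q`, a common divisor of
`a, b, c` divides `x, y, z`, so `(a, b, c)` is primitive. Induction on the prime factors of `d`
finishes the proof.
-/

open Quaternion

namespace Quaternion

variable {R S : Type*} [CommRing R] [CommRing S]

/-- The anonymous constructor `⟨a, b, c, d⟩` elaborates in `ℍ[R,-1,0,-1]`, where the simp lemmas
about `ℍ[R]` do not apply. -/
def ofCoords (a b c d : R) : ℍ[R] := ⟨a, b, c, d⟩

section ofCoords
variable (a b c d : R)
@[simp] lemma re_ofCoords : (ofCoords a b c d).re = a := rfl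
@[simp] lemma imI_ofCoords : (ofCoords a b c d).imI = b := rfl
@[simp] lemma imJ_ofCoords : (ofCoords a b c d).imJ = c := rfl
@[simp] lemma imK_ofCoords : (ofCoords a b c d).imK = d := rfl
end ofCoords

def mapRingHom (f : R →+* S) : ℍ[R] →+* ℍ[S] where
  toFun a := ofCoords (f a.re) (f a.imI) (f a.imJ) (f a.imK)
  map_one' := by ext <;> simp
  map_mul' a b := by ext <;> simp [re_mul, imI_mul, imJ_mul, imK_mul]
  map_zero' := by ext <;> simp
  map_add' a b := by ext <;> simp

section mapRingHom
variable (f : R →+* S) (a : ℍ[R])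
@[simp] lemma re_mapRingHom : (mapRingHom f a).re = f a.re := rfl
@[simp] lemma imI_mapRingHom : (mapRingHom f a).imI = f a.imI := rfl
@[simp] lemma imJ_mapRingHom : (mapRingHom f a).imJ = f a.imJ := rfl
@[simp] lemma imK_mapRingHom : (mapRingHom f a).imK = f a.imK := rfl
end mapRingHom

lemma smul_add_mul_mul_mul_star {r n : R} {α β v : ℍ[R]} (hv : star v = -v)
    (hvv : v * v = -((r ^ 2 * n) • 1)) :
    (r • α + β * v) * v * star (r • α + β * v) =
      r ^ 2 • (α * v * star α + n • (β * v * star β) + (r * n) • (α * star β - β * star α)) := by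
  have hvv' (x : ℍ[R]) : v * (v * x) = -((r ^ 2 * n) • x) := by
    rw [← mul_assoc, hvv, neg_mul, smul_one_mul]
  simp only [star_add, star_mul, Quaternion.star_smul, hv, add_mul, mul_add, neg_mul, mul_neg,
    mul_assoc, smul_mul_assoc, mul_smul_comm, hvv']
  module

end Quaternion

local notation "ι" => mapRingHom (Int.castRingHom ℚ)

namespace Quaternion

def lipschitz : Subring ℍ[ℚ] := (ι).range

def ω : ℍ[ℚ] := ofCoords (1 / 2) (1 / 2) (1 / 2) (1 / 2)

lemma ω_add_ω_mem_lipschitz : ω + ω ∈ lipschitz :=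
  ⟨ofCoords 1 1 1 1, by ext <;> simp [ω] <;> norm_num⟩

lemma ω_mul_ω : ω * ω = ω - 1 := by
  ext <;> simp [ω, re_mul, imI_mul, imJ_mul, imK_mul] <;> norm_num

lemma mapRingHom_mul_ω (a : ℍ[ℤ]) :
    ι a * ω = ι (ofCoords (-(a.imI + a.imJ + a.imK)) (-a.imK) (-a.imI) (-a.imJ)) +
      (a.re + a.imI + a.imJ + a.imK) • ω := by
  ext <;> simp [ω, re_mul, imI_mul, imJ_mul, imK_mul] <;> ring

lemma ω_mul_mapRingHom (a : ℍ[ℤ]) :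
    ω * ι a = ι (ofCoords (-(a.imI + a.imJ + a.imK)) (-a.imJ) (-a.imK) (-a.imI)) +
      (a.re + a.imI + a.imJ + a.imK) • ω := by
  ext <;> simp [ω, re_mul, imI_mul, imJ_mul, imK_mul] <;> ring

lemma mem_lipschitz_sup_zmultiples_ω {x : ℍ[ℚ]} :
    x ∈ lipschitz.toAddSubgroup ⊔ AddSubgroup.zmultiples ω ↔
      ∃ a : ℍ[ℤ], ∃ s : ℤ, ι a + s • ω = x := by
  simp [AddSubgroup.mem_sup, AddSubgroup.mem_zmultiples_iff, lipschitz]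

lemma mul_mem_lipschitz_sup_zmultiples_ω {x y : ℍ[ℚ]}
    (hx : x ∈ lipschitz.toAddSubgroup ⊔ AddSubgroup.zmultiples ω)
    (hy : y ∈ lipschitz.toAddSubgroup ⊔ AddSubgroup.zmultiples ω) :
    x * y ∈ lipschitz.toAddSubgroup ⊔ AddSubgroup.zmultiples ω := by
  have hmem (a : ℍ[ℤ]) (s : ℤ) :
      ι a + s • ω ∈ lipschitz.toAddSubgroup ⊔ AddSubgroup.zmultiples ω :=
    mem_lipschitz_sup_zmultiples_ω.2 ⟨a, s, rfl⟩
  obtain ⟨a, s, rfl⟩ := mem_lipschitz_sup_zmultiples_ω.1 hx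
  obtain ⟨b, t, rfl⟩ := mem_lipschitz_sup_zmultiples_ω.1 hy
  have hexp : (ι a + s • ω) * (ι b + t • ω) =
      (ι (a * b) + 0 • ω) + t • (ι a * ω) + s • (ω * ι b) + (s * t) • (ι (-1) + 1 • ω) := by
    rw [map_mul, map_neg, map_one, one_smul, ← sub_eq_neg_add, ← ω_mul_ω]
    simp only [add_mul, mul_add, smul_mul_assoc, mul_smul_comm, zero_smul, add_zero]
    module
  rw [hexp, mapRingHom_mul_ω, ω_mul_mapRingHom]
  exact add_mem (add_mem (add_mem (hmem _ _) (zsmul_mem (hmem _ _) _)) (zsmul_mem (hmem _ _) _))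
    (zsmul_mem (hmem _ _) _)

def hurwitz : Subring ℍ[ℚ] :=
  { lipschitz.toAddSubgroup ⊔ AddSubgroup.zmultiples ω with
    one_mem' := AddSubgroup.mem_sup_left (one_mem lipschitz)
    mul_mem' := mul_mem_lipschitz_sup_zmultiples_ω }

lemma mem_hurwitz {x : ℍ[ℚ]} : x ∈ hurwitz ↔ ∃ a : ℍ[ℤ], ∃ s : ℤ, ι a + s • ω = x :=
  mem_lipschitz_sup_zmultiples_ω

lemma lipschitz_le_hurwitz : lipschitz ≤ hurwitz := fun _ hx => AddSubgroup.mem_sup_left hx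

lemma star_mem_hurwitz {x : ℍ[ℚ]} (hx : x ∈ hurwitz) : star x ∈ hurwitz := by
  obtain ⟨a, s, rfl⟩ := mem_hurwitz.1 hx
  exact mem_hurwitz.2 ⟨star a + s, -s, by ext <;> simp [ω] <;> ring⟩

lemma exists_normSq_eq_natCast_of_mem_hurwitz {x : ℍ[ℚ]} (hx : x ∈ hurwitz) :
    ∃ k : ℕ, normSq x = k := by
  obtain ⟨a, s, rfl⟩ := mem_hurwitz.1 hx
  obtain ⟨N, hN⟩ : ∃ N : ℤ, normSq (ι a + s • ω) = N :=
    ⟨a.re ^ 2 + a.imI ^ 2 + a.imJ ^ 2 + a.imK ^ 2 + s * (a.re + a.imI + a.imJ + a.imK) + s ^ 2, by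
      rw [normSq_def']; push_cast; simp [ω]; ring⟩
  lift N to ℕ using (by exact_mod_cast hN ▸ normSq_nonneg)
  exact ⟨N, by exact_mod_cast hN⟩

lemma mem_lipschitz_of_re_eq_zero {x : ℍ[ℚ]} (hx : x ∈ hurwitz) (hre : x.re = 0) :
    x ∈ lipschitz := by
  obtain ⟨a, s, rfl⟩ := mem_hurwitz.1 hx
  have hs : s = 2 * -a.re := by
    have : (a.re : ℚ) + s / 2 = 0 := by simpa [ω, div_eq_mul_inv] using hre
    exact_mod_cast (by linarith : (s : ℚ) = 2 * -a.re)
  rw [hs, mul_comm, mul_zsmul, two_zsmul]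
  exact add_mem ⟨a, rfl⟩ (zsmul_mem ω_add_ω_mem_lipschitz _)

lemma exists_eq_pure_of_re_eq_zero {u : ℍ[ℚ]} (hu : u ∈ hurwitz) (hre : u.re = 0) :
    ∃ x y z : ℤ, u = ι (ofCoords 0 x y z) := by
  obtain ⟨a, rfl⟩ := mem_lipschitz_of_re_eq_zero hu hre
  exact ⟨a.imI, a.imJ, a.imK, by ext <;> simp_all⟩


lemma sq_sub_round_add_sq_sub_round_sub_half_le {α : Type*} [Field α] [LinearOrder α]
    [IsStrictOrderedRing α] [FloorRing α] (t : α) :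
    (t - round t) ^ 2 + (t - 1 / 2 - round (t - 1 / 2)) ^ 2 ≤ 1 / 4 := by
  set s := t - round t
  have hs := abs_le.1 (abs_sub_round t)
  -- `t - 1/2` lies within `1/2 - |s|` of `round t` or of `round t - 1`
  rcases le_total 0 s with h | h
  · have := sq_le_sq.2 (round_le (t - 1 / 2) (round t))
    nlinarith
  · have := sq_le_sq.2 (round_le (t - 1 / 2) (round t - 1))
    push_cast at this
    nlinarith

lemma exists_mem_hurwitz_normSq_sub_lt_one (x : ℍ[ℚ]) : ∃ h ∈ hurwitz, normSq (x - h) < 1 := by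
  set A := ι (ofCoords (round x.re) (round x.imI) (round x.imJ) (round x.imK))
  set B := ι (ofCoords (round (x.re - 1 / 2)) (round (x.imI - 1 / 2)) (round (x.imJ - 1 / 2))
    (round (x.imK - 1 / 2))) + ω
  have hsum : normSq (x - A) + normSq (x - B) ≤ 1 := by
    simp only [A, B, normSq_def']
    simp [ω]
    linarith [sq_sub_round_add_sq_sub_round_sub_half_le x.re,
      sq_sub_round_add_sq_sub_round_sub_half_le x.imI,
      sq_sub_round_add_sq_sub_round_sub_half_le x.imJ,
      sq_sub_round_add_sq_sub_round_sub_half_le x.imK]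
  rcases lt_or_ge (normSq (x - A)) 1 with hA | hA
  · exact ⟨A, lipschitz_le_hurwitz ⟨_, rfl⟩, hA⟩
  · exact ⟨B, add_mem (lipschitz_le_hurwitz ⟨_, rfl⟩) (mem_hurwitz.2 ⟨0, 1, by simp⟩),
      by linarith⟩

lemma exists_mem_hurwitz_normSq_sub_mul_lt (a : ℍ[ℚ]) {q : ℍ[ℚ]} (hq : q ≠ 0) :
    ∃ h ∈ hurwitz, normSq (a - h * q) < normSq q := by
  obtain ⟨h, hh, hlt⟩ := exists_mem_hurwitz_normSq_sub_lt_one (a * q⁻¹)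
  refine ⟨h, hh, ?_⟩
  have hq' : 0 < normSq q := normSq_nonneg.lt_of_ne (normSq_ne_zero.2 hq).symm
  calc normSq (a - h * q) = normSq (a * q⁻¹ - h) * normSq q := by
        rw [← map_mul, sub_mul, inv_mul_cancel_right₀ hq]
    _ < 1 * normSq q := by gcongr
    _ = normSq q := one_mul _

instance : IsPrincipalIdealRing hurwitz where
  principal J := by
    classical
    by_cases hJ : J = ⊥
    · exact hJ ▸ bot_isPrincipal
    have hex : ∃ k : ℕ, ∃ q ∈ J, q ≠ 0 ∧ normSq (q : ℍ[ℚ]) = k := by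
      obtain ⟨q, hqJ, hq0⟩ := Submodule.exists_mem_ne_zero_of_ne_bot hJ
      obtain ⟨k, hk⟩ := exists_normSq_eq_natCast_of_mem_hurwitz q.2
      exact ⟨k, q, hqJ, hq0, hk⟩
    obtain ⟨q, hqJ, hq0, hqk⟩ := Nat.find_spec hex
    refine ⟨q, le_antisymm (fun a ha => ?_) ((Ideal.span_singleton_le_iff_mem _).2 hqJ)⟩
    obtain ⟨h, hh, hlt⟩ :=
      exists_mem_hurwitz_normSq_sub_mul_lt a (Subtype.coe_ne_coe.2 hq0 : (q : ℍ[ℚ]) ≠ 0)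
    set r : hurwitz := a - ⟨h, hh⟩ * q
    by_cases hr : r = 0
    · exact Submodule.mem_span_singleton.2 ⟨⟨h, hh⟩, (sub_eq_zero.1 hr).symm⟩
    obtain ⟨k, hk⟩ := exists_normSq_eq_natCast_of_mem_hurwitz r.2
    have hmin : Nat.find hex ≤ k := Nat.find_min' hex ⟨r, sub_mem ha (J.smul_mem _ hqJ), hr, hk⟩
    have : (k : ℚ) < Nat.find hex := hk ▸ hqk ▸ hlt
    exact absurd hmin (by exact_mod_cast this.not_ge)

lemma dvd_gcd_of_eq_natCast_mul {x y z : ℤ} {k : ℕ} {u : ℍ[ℚ]} (hu : u ∈ hurwitz)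
    (h : ι (ofCoords 0 x y z) = (k : ℍ[ℚ]) * u) : k ∣ Int.gcd (Int.gcd x y) z := by
  rw [← coe_natCast, coe_mul_eq_smul, Quaternion.ext_iff] at h
  simp only [re_mapRingHom, imI_mapRingHom, imJ_mapRingHom, imK_mapRingHom, re_ofCoords,
    imI_ofCoords, imJ_ofCoords, imK_ofCoords, eq_intCast, Int.cast_zero, re_smul, imI_smul,
    imJ_smul, imK_smul, smul_eq_mul] at h
  obtain ⟨hre, hx, hy, hz⟩ := h
  rcases eq_or_ne k 0 with rfl | hk
  · simp_all
  obtain ⟨b, rfl⟩ := mem_lipschitz_of_re_eq_zero hu (by simpa [hk] using hre.symm)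
  simp only [imI_mapRingHom, imJ_mapRingHom, imK_mapRingHom, eq_intCast] at hx hy hz
  exact Int.natCast_dvd_natCast.1 (Int.dvd_coe_gcd (Int.dvd_coe_gcd ⟨_, by exact_mod_cast hx⟩
    ⟨_, by exact_mod_cast hy⟩) ⟨_, by exact_mod_cast hz⟩)

lemma gcd_dvd_gcd_of_eq_star_mul_mul {a b c x y z : ℤ} {q : ℍ[ℚ]} (hq : q ∈ hurwitz)
    (h : ι (ofCoords 0 x y z) = star q * ι (ofCoords 0 a b c) * q) :
    Int.gcd (Int.gcd a b) c ∣ Int.gcd (Int.gcd x y) z := by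
  set g := Int.gcd (Int.gcd a b) c
  obtain ⟨a', ha⟩ : (g : ℤ) ∣ a := (Int.gcd_dvd_left _ _).trans (Int.gcd_dvd_left _ _)
  obtain ⟨b', hb⟩ : (g : ℤ) ∣ b := (Int.gcd_dvd_left _ _).trans (Int.gcd_dvd_right _ _)
  obtain ⟨c', hc⟩ : (g : ℤ) ∣ c := Int.gcd_dvd_right _ _
  have hW : ι (ofCoords 0 a b c) = (g : ℍ[ℚ]) * ι (ofCoords 0 a' b' c') := by
    rw [← map_natCast ι, ← map_mul]
    congr 1
    ext <;> simp [ha, hb, hc]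
  refine dvd_gcd_of_eq_natCast_mul (u := star q * ι (ofCoords 0 a' b' c') * q)
    (mul_mem (mul_mem (star_mem_hurwitz hq) (lipschitz_le_hurwitz ⟨_, rfl⟩)) hq) ?_
  rw [h, hW, ← mul_assoc, ← Nat.cast_comm, mul_assoc, mul_assoc, mul_assoc]

lemma exists_eq_natCast_mul_of_one_mem_span_pair {p : ℕ} {n : ℤ} {v : hurwitz}
    (hvv : (v : ℍ[ℚ]) * v = -((p ^ 2 * n : ℚ) • 1)) (h1 : 1 ∈ Ideal.span {(p : hurwitz), v}) :
    ∃ u ∈ hurwitz, (v : ℍ[ℚ]) = p * u := by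
  obtain ⟨α, β, hαβ⟩ := Ideal.mem_span_pair.1 h1
  refine ⟨α * v - (p * n : ℤ) * β, sub_mem (mul_mem α.2 v.2) (mul_mem (intCast_mem _ _) β.2), ?_⟩
  have := congrArg (fun x : hurwitz => (x : ℍ[ℚ]) * v) hαβ
  simp only [Subring.coe_add, Subring.coe_mul, Subring.coe_natCast, Subring.coe_one,
    one_mul] at this
  -- `v = (α p + β v) v = p α v - p² n β`
  conv_lhs => rw [← this]
  simp only [← coe_natCast, ← coe_intCast, coe_mul_eq_smul, mul_coe_eq_smul, add_mul, mul_assoc,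
    hvv, smul_mul_assoc, mul_neg, mul_smul_comm, mul_one, mul_sub]
  push_cast
  module

lemma normSq_eq_of_span_pair_eq_span_singleton {p : ℕ} (hp : p.Prime) {n : ℤ} {v q : hurwitz}
    (hvv : (v : ℍ[ℚ]) * v = -((p ^ 2 * n : ℚ) • 1)) (hv : ∀ u ∈ hurwitz, (v : ℍ[ℚ]) ≠ p * u)
    (hq : Ideal.span {(p : hurwitz), v} = Ideal.span {q}) : normSq (q : ℍ[ℚ]) = p := by
  have hJ {a : hurwitz} (ha : a ∈ Ideal.span {(p : hurwitz), v}) :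
      ∃ h : hurwitz, (a : ℍ[ℚ]) = h * q := by
    obtain ⟨h, hh⟩ := Submodule.mem_span_singleton.1 (hq ▸ ha)
    exact ⟨h, by rw [← hh, smul_eq_mul, Subring.coe_mul]⟩
  obtain ⟨h, hhq⟩ := hJ (Ideal.subset_span (by simp) : (p : hurwitz) ∈ _)
  obtain ⟨k₀, hk₀⟩ := exists_normSq_eq_natCast_of_mem_hurwitz q.2
  obtain ⟨k₁, hk₁⟩ := exists_normSq_eq_natCast_of_mem_hurwitz h.2
  have hprod : k₁ * k₀ = p ^ 2 := by
    have := congrArg normSq hhq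
    rw [map_mul, hk₀, hk₁, Subring.coe_natCast, normSq_natCast] at this
    exact_mod_cast this.symm
  obtain ⟨i, hi, hk⟩ := (Nat.dvd_prime_pow hp).1 (Dvd.intro_left _ hprod)
  interval_cases i
  · -- `q` is a unit, so `1 ∈ Hq = Hp + Hv`
    have h1 : (1 : hurwitz) ∈ Ideal.span {(p : hurwitz), v} := by
      have : (⟨star q, star_mem_hurwitz q.2⟩ : hurwitz) * q = 1 := by
        ext1; simp [star_mul_self, hk₀, hk]
      rw [hq, ← this]
      exact Ideal.mul_mem_left _ _ (Ideal.subset_span rfl)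
    obtain ⟨u, hu, hvu⟩ := exists_eq_natCast_mul_of_one_mem_span_pair hvv h1
    exact absurd hvu (hv u hu)
  · simpa [hk] using hk₀
  · -- `h` is a unit, so `q = h⋆ p` and then `v ∈ H q = H h⋆ p`
    exfalso
    have hk₁' : k₁ = 1 := by
      rw [hk] at hprod
      exact Nat.eq_of_mul_eq_mul_right (pow_pos hp.pos 2) (by simpa using hprod)
    obtain ⟨h', hh'⟩ := hJ (Ideal.subset_span (by simp) : v ∈ _)
    refine hv (h' * star (h : ℍ[ℚ])) (mul_mem h'.2 (star_mem_hurwitz h.2)) ?_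
    have hqp : (q : ℍ[ℚ]) = star (h : ℍ[ℚ]) * p := by
      rw [← Subring.coe_natCast, hhq, ← mul_assoc, star_mul_self, hk₁, hk₁', Nat.cast_one, coe_one,
        one_mul]
    rw [hh', hqp, ← mul_assoc, Nat.cast_comm]

lemma exists_eq_star_mul_mul_of_mem_span_pair {p : ℕ} (hp : p ≠ 0) {n : ℤ} {v q : hurwitz}
    (hvstar : star (v : ℍ[ℚ]) = -v) (hvv : (v : ℍ[ℚ]) * v = -((p ^ 2 * n : ℚ) • 1))
    (hq : q ∈ Ideal.span {(p : hurwitz), v}) (hNq : normSq (q : ℍ[ℚ]) = p) :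
    ∃ a b c : ℤ, (v : ℍ[ℚ]) = star (q : ℍ[ℚ]) * ι (ofCoords 0 a b c) * q := by
  obtain ⟨α, β, hαβ⟩ := Ideal.mem_span_pair.1 hq
  have hα := star_mem_hurwitz α.2
  have hβ := star_mem_hurwitz β.2
  set W := (α : ℍ[ℚ]) * v * star (α : ℍ[ℚ]) + (n : ℚ) • ((β : ℍ[ℚ]) * v * star (β : ℍ[ℚ])) +
    ((p : ℚ) * n) • ((α : ℍ[ℚ]) * star (β : ℍ[ℚ]) - (β : ℍ[ℚ]) * star (α : ℍ[ℚ]))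
  have hqW : (q : ℍ[ℚ]) * v * star (q : ℍ[ℚ]) = (p : ℚ) ^ 2 • W := by
    rw [← smul_add_mul_mul_mul_star hvstar hvv, ← hαβ]
    simp [← coe_natCast, mul_coe_eq_smul]
  have hWH : W ∈ hurwitz := by
    have hsmul (r : ℤ) {w : ℍ[ℚ]} (hw : w ∈ hurwitz) : (r : ℚ) • w ∈ hurwitz := by
      rw [Int.cast_smul_eq_zsmul]; exact zsmul_mem hw r
    refine add_mem (add_mem (mul_mem (mul_mem α.2 v.2) hα) (hsmul n (mul_mem (mul_mem β.2 v.2) hβ)))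
      (by exact_mod_cast hsmul (p * n) (sub_mem (mul_mem α.2 hβ) (mul_mem β.2 hα)))
  have hp0 : (p : ℚ) ^ 2 ≠ 0 := pow_ne_zero 2 (Nat.cast_ne_zero.2 hp)
  have hWre : W.re = 0 := by
    have h0 := (Quaternion.star_eq_neg (a := (q : ℍ[ℚ]) * (v : ℍ[ℚ]) * star (q : ℍ[ℚ]))).1
      (by simp only [star_mul, star_star, hvstar, mul_neg, neg_mul, mul_assoc])
    rw [hqW, re_smul, smul_eq_mul] at h0
    exact (mul_eq_zero.1 h0).resolve_left hp0
  clear_value W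
  obtain ⟨a, b, c, rfl⟩ := exists_eq_pure_of_re_eq_zero hWH hWre
  refine ⟨a, b, c, smul_right_injective _ hp0 ?_⟩
  calc (p : ℚ) ^ 2 • (v : ℍ[ℚ]) = (star (q : ℍ[ℚ]) * q) * v * (star (q : ℍ[ℚ]) * q) := by
        rw [star_mul_self, hNq, coe_mul_eq_smul, mul_coe_eq_smul, smul_smul, sq]
    _ = star (q : ℍ[ℚ]) * ((q : ℍ[ℚ]) * v * star (q : ℍ[ℚ])) * q := by simp only [mul_assoc]
    _ = (p : ℚ) ^ 2 • (star (q : ℍ[ℚ]) * ι (ofCoords 0 a b c) * q) := by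
        rw [hqW, mul_smul_comm, smul_mul_assoc]

end Quaternion

def IsPrimitiveSumThreeSq (m : ℤ) : Prop :=
  ∃ x y z : ℤ, m = x ^ 2 + y ^ 2 + z ^ 2 ∧ Int.gcd (Int.gcd x y) z = 1

theorem IsPrimitiveSumThreeSq.of_prime_sq_mul {p : ℕ} (hp : p.Prime) {n : ℤ}
    (h : IsPrimitiveSumThreeSq (p ^ 2 * n)) : IsPrimitiveSumThreeSq n := by
  obtain ⟨x, y, z, hxyz, hcop⟩ := h
  set v : ℍ[ℚ] := ι (ofCoords 0 x y z)
  have hvH : v ∈ hurwitz := lipschitz_le_hurwitz ⟨_, rfl⟩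
  have hvstar : star v = -v := Quaternion.star_eq_neg.2 (by simp [v])
  have hxyzQ : (p ^ 2 * n : ℚ) = x ^ 2 + y ^ 2 + z ^ 2 := by exact_mod_cast hxyz
  have hvv : v * v = -((p ^ 2 * n : ℚ) • 1) := by
    ext <;> simp [v, re_mul, imI_mul, imJ_mul, imK_mul, hxyzQ] <;> ring
  have hpv : ∀ u ∈ hurwitz, v ≠ p * u := fun u hu hvu =>
    hp.one_lt.ne' (Nat.dvd_one.1 (hcop ▸ dvd_gcd_of_eq_natCast_mul hu hvu))
  obtain ⟨q, hq⟩ := (IsPrincipalIdealRing.principal (Ideal.span {(p : hurwitz), ⟨v, hvH⟩})).principal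
  have hNq := normSq_eq_of_span_pair_eq_span_singleton hp hvv hpv hq
  obtain ⟨a, b, c, hvW⟩ := exists_eq_star_mul_mul_of_mem_span_pair hp.ne_zero hvstar hvv
    (by rw [hq]; exact Submodule.mem_span_singleton_self q) hNq
  refine ⟨a, b, c, ?_, Nat.dvd_one.1 (hcop ▸ gcd_dvd_gcd_of_eq_star_mul_mul q.2 hvW)⟩
  have hN := congrArg normSq hvW
  rw [map_mul, map_mul, normSq_star, hNq, normSq_def', normSq_def'] at hN
  simp only [v, re_mapRingHom, imI_mapRingHom, imJ_mapRingHom, imK_mapRingHom, re_ofCoords,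
    imI_ofCoords, imJ_ofCoords, imK_ofCoords, eq_intCast, Int.cast_zero] at hN
  have : (n : ℚ) = a ^ 2 + b ^ 2 + c ^ 2 := by
    apply mul_left_cancel₀ (pow_ne_zero 2 (Nat.cast_ne_zero.2 hp.ne_zero) : (p : ℚ) ^ 2 ≠ 0)
    linear_combination hN + hxyzQ
  exact_mod_cast this

theorem IsPrimitiveSumThreeSq.of_sq_mul (d : ℕ) {m : ℤ} (h : IsPrimitiveSumThreeSq (d ^ 2 * m)) :
    IsPrimitiveSumThreeSq m := by
  induction d using induction_on_primes generalizing m with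
  | zero =>
    obtain ⟨x, y, z, hxyz, hcop⟩ := h
    have h0 : x ^ 2 + y ^ 2 + z ^ 2 = 0 := by simpa using hxyz.symm
    obtain ⟨rfl, rfl, rfl⟩ : x = 0 ∧ y = 0 ∧ z = 0 := by
      refine ⟨?_, ?_, ?_⟩ <;> nlinarith [sq_nonneg x, sq_nonneg y, sq_nonneg z]
    simp at hcop
  | one => simpa using h
  | prime_mul p a hp ih =>
    refine (ih ?_).of_prime_sq_mul hp
    convert h using 1
    push_cast
    ring

theorem sum_three_coprime_squares_descent (d m : ℕ)
    (x y z : ℤ) (h : (d : ℤ)^2 * m = x^2 + y^2 + z^2)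
    (hcop : Int.gcd (Int.gcd x y) z = 1) :
    ∃ a b c : ℤ, (m : ℤ) = a^2 + b^2 + c^2 ∧ Int.gcd (Int.gcd a b) c = 1 :=
  IsPrimitiveSumThreeSq.of_sq_mul d ⟨x, y, z, h, hcop⟩
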